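/- (Covering by the combined sections.) Let M be an exact pointwise finite-dimensional persistence bimodule over ℝ², let t ∈ ℝ², and let X ⊊ M_t be a proper subspace. For a shape S with t ∈ supp(S), set F⁺_{S,t} = Im⁻_{S,t} + Im⁺_{S,t} ∩ Ker⁺_{S,t} and F⁻_{S,t} = Im⁻_{S,t} + Im⁺_{S,t} ∩ Ker⁻_{S,t}. Then there exists a shape S with t ∈ supp(S) such that F⁻_{S,t} ⊆ X and F⁺_{S,t} ⊄ X. -/

import Mathlib

attribute [local instance] Classical.propDecidable
set_option linter.unusedVariables false

/-- A persistence module over a preorder `P` with coefficients in a field `k`. -/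
structure PersMod (P : Type) [Preorder P] (k : Type) [Field k] where
  space : P → Type
  [isAddCommGroup : ∀ p, AddCommGroup (space p)]
  [isModule : ∀ p, Module k (space p)]
  map : ∀ {s t : P}, s ≤ t → (space s →ₗ[k] space t)
  map_refl : ∀ t : P, map (le_refl t) = LinearMap.id
  map_trans : ∀ {s t u : P} (h₁ : s ≤ t) (h₂ : t ≤ u),
    map (h₁.trans h₂) = (map h₂).comp (map h₁)

attribute [instance] PersMod.isAddCommGroup PersMod.isModule

variable {P : Type} [Preorder P] {k : Type} [Field k]

/-- Pointwise finite-dimensionality. -/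
def PersMod.pfd (M : PersMod P k) : Prop := ∀ t : P, FiniteDimensional k (M.space t)

/-- Isomorphism of persistence modules: a family of linear equivalences commuting
with the structure maps. -/
def PersMod.Iso (M N : PersMod P k) : Prop :=
  ∃ e : ∀ t : P, M.space t ≃ₗ[k] N.space t,
    ∀ {s t : P} (h : s ≤ t) (x : M.space s), e t (M.map h x) = N.map h (e s x)

/-- A cut of a linearly ordered set: a partition into a lower part and an
upward-closed upper part. -/
structure Cut (α : Type) [LinearOrder α] where
  neg : Set α
  pos : Set α
  union_eq : neg ∪ pos = Set.univ
  inter_eq : neg ∩ pos = ∅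
  lt : ∀ x ∈ neg, ∀ y ∈ pos, x < y

variable {α : Type} [LinearOrder α]

lemma Cut.mem_pos_of_le (c : Cut α) {x y : α} (hx : x ∈ c.pos) (h : x ≤ y) : y ∈ c.pos := by
  have hy : y ∈ c.neg ∪ c.pos := c.union_eq ▸ Set.mem_univ y
  rcases hy with hy | hy
  · exact absurd h (not_le.mpr (c.lt y hy x hx))
  · exact hy

lemma Cut.mem_neg_of_le (c : Cut α) {x y : α} (hx : x ∈ c.neg) (h : y ≤ x) : y ∈ c.neg := by
  have hy : y ∈ c.neg ∪ c.pos := c.union_eq ▸ Set.mem_univ y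
  rcases hy with hy | hy
  · exact hy
  · exact absurd h (not_le.mpr (c.lt x hx y hy))

/-- Exactness of a persistence bimodule. -/
def IsExactBimod {α β : Type} [Preorder α] [Preorder β] {k : Type} [Field k]
    (M : PersMod (α × β) k) : Prop :=
  ∀ (s t : α × β) (h : s ≤ t),
    ∀ (y : M.space (t.1, s.2)) (z : M.space (s.1, t.2)),
      (M.map (show (t.1, s.2) ≤ t from ⟨le_rfl, h.2⟩) y =
        M.map (show (s.1, t.2) ≤ t from ⟨h.1, le_rfl⟩) z) ↔
      ∃ x : M.space s,
        M.map (show s ≤ (t.1, s.2) from ⟨h.1, le_rfl⟩) x = y ∧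
        M.map (show s ≤ (s.1, t.2) from ⟨le_rfl, h.2⟩) x = z

variable {k : Type} [Field k]

/-- `Im⁻_{c,t}` for a horizontal cut `c` with `t₁ ∈ c⁺`: the union of the images of the
maps coming from points `(x, t₂)` with `x ∈ c⁻`. -/
noncomputable def ImNegH (M : PersMod (ℝ × ℝ) k) (c : Cut ℝ) (t : ℝ × ℝ)
    (ht : t.1 ∈ c.pos) : Submodule k (M.space t) :=
  ⨆ x : c.neg, LinearMap.range
    (M.map (show ((x : ℝ), t.2) ≤ t from ⟨(c.lt x x.2 t.1 ht).le, le_rfl⟩))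

/-- `Im⁺_{c,t}` for a horizontal cut `c` with `t₁ ∈ c⁺`: the intersection of the images
of the maps coming from points `(x, t₂)` with `x ∈ c⁺`, `x ≤ t₁`. -/
noncomputable def ImPosH (M : PersMod (ℝ × ℝ) k) (c : Cut ℝ) (t : ℝ × ℝ)
    (ht : t.1 ∈ c.pos) : Submodule k (M.space t) :=
  ⨅ x : {x : ℝ // x ∈ c.pos ∧ x ≤ t.1}, LinearMap.range
    (M.map (show ((x : ℝ), t.2) ≤ t from ⟨x.2.2, le_rfl⟩))

/-- `Ker⁻_{c,t}` for a horizontal cut `c` with `t₁ ∈ c⁻`: the union of the kernels of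
the maps to points `(x, t₂)` with `x ∈ c⁻`, `t₁ ≤ x`. -/
noncomputable def KerNegH (M : PersMod (ℝ × ℝ) k) (c : Cut ℝ) (t : ℝ × ℝ)
    (ht : t.1 ∈ c.neg) : Submodule k (M.space t) :=
  ⨆ x : {x : ℝ // x ∈ c.neg ∧ t.1 ≤ x}, LinearMap.ker
    (M.map (show t ≤ ((x : ℝ), t.2) from ⟨x.2.2, le_rfl⟩))

/-- `Ker⁺_{c,t}` for a horizontal cut `c` with `t₁ ∈ c⁻`: the intersection of the
kernels of the maps to points `(x, t₂)` with `x ∈ c⁺`. -/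
noncomputable def KerPosH (M : PersMod (ℝ × ℝ) k) (c : Cut ℝ) (t : ℝ × ℝ)
    (ht : t.1 ∈ c.neg) : Submodule k (M.space t) :=
  ⨅ x : c.pos, LinearMap.ker
    (M.map (show t ≤ ((x : ℝ), t.2) from ⟨(c.lt t.1 ht x x.2).le, le_rfl⟩))

/-- `Im⁻_{d,t}` for a vertical cut `d` with `t₂ ∈ d⁺`. -/
noncomputable def ImNegV (M : PersMod (ℝ × ℝ) k) (d : Cut ℝ) (t : ℝ × ℝ)
    (ht : t.2 ∈ d.pos) : Submodule k (M.space t) :=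
  ⨆ y : d.neg, LinearMap.range
    (M.map (show (t.1, (y : ℝ)) ≤ t from ⟨le_rfl, (d.lt y y.2 t.2 ht).le⟩))

/-- `Im⁺_{d,t}` for a vertical cut `d` with `t₂ ∈ d⁺`. -/
noncomputable def ImPosV (M : PersMod (ℝ × ℝ) k) (d : Cut ℝ) (t : ℝ × ℝ)
    (ht : t.2 ∈ d.pos) : Submodule k (M.space t) :=
  ⨅ y : {y : ℝ // y ∈ d.pos ∧ y ≤ t.2}, LinearMap.range
    (M.map (show (t.1, (y : ℝ)) ≤ t from ⟨le_rfl, y.2.2⟩))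

/-- `Ker⁻_{d,t}` for a vertical cut `d` with `t₂ ∈ d⁻`. -/
noncomputable def KerNegV (M : PersMod (ℝ × ℝ) k) (d : Cut ℝ) (t : ℝ × ℝ)
    (ht : t.2 ∈ d.neg) : Submodule k (M.space t) :=
  ⨆ y : {y : ℝ // y ∈ d.neg ∧ t.2 ≤ y}, LinearMap.ker
    (M.map (show t ≤ (t.1, (y : ℝ)) from ⟨le_rfl, y.2.2⟩))

/-- `Ker⁺_{d,t}` for a vertical cut `d` with `t₂ ∈ d⁻`. -/
noncomputable def KerPosV (M : PersMod (ℝ × ℝ) k) (d : Cut ℝ) (t : ℝ × ℝ)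
    (ht : t.2 ∈ d.neg) : Submodule k (M.space t) :=
  ⨅ y : d.pos, LinearMap.ker
    (M.map (show t ≤ (t.1, (y : ℝ)) from ⟨le_rfl, (d.lt t.2 ht y y.2).le⟩))

/-- A shape: four cuts (left, right horizontal; bottom, top vertical) delimiting the
support, of one of the four types: birth quadrant, death quadrant, horizontal band,
vertical band. -/
structure Shape where
  l : Cut ℝ
  r : Cut ℝ
  v : Cut ℝ
  w : Cut ℝ
  types : (r.pos = ∅ ∧ w.pos = ∅) ∨ (l.neg = ∅ ∧ v.neg = ∅) ∨
    (l.neg = ∅ ∧ r.pos = ∅) ∨ (v.neg = ∅ ∧ w.pos = ∅)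

/-- The support of a shape. -/
def Shape.supp (S : Shape) : Set (ℝ × ℝ) := (S.l.pos ∩ S.r.neg) ×ˢ (S.v.pos ∩ S.w.neg)

/-- `Im⁺_{S,t}` for a shape `S` and `t ∈ supp S`. -/
noncomputable def Shape.ImPos (M : PersMod (ℝ × ℝ) k) (S : Shape) (t : ℝ × ℝ)
    (ht : t ∈ S.supp) : Submodule k (M.space t) :=
  ImPosH M S.l t ht.1.1 ⊓ ImPosV M S.v t ht.2.1

/-- `Im⁻_{S,t}` for a shape `S` and `t ∈ supp S`. -/
noncomputable def Shape.ImNeg (M : PersMod (ℝ × ℝ) k) (S : Shape) (t : ℝ × ℝ)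
    (ht : t ∈ S.supp) : Submodule k (M.space t) :=
  ImNegH M S.l t ht.1.1 ⊓ ImPosV M S.v t ht.2.1 ⊔ ImNegV M S.v t ht.2.1 ⊓ ImPosH M S.l t ht.1.1

/-- `Ker⁺_{S,t}` for a shape `S` and `t ∈ supp S`. -/
noncomputable def Shape.KerPos (M : PersMod (ℝ × ℝ) k) (S : Shape) (t : ℝ × ℝ)
    (ht : t ∈ S.supp) : Submodule k (M.space t) :=
  KerPosH M S.r t ht.1.2 ⊓ KerPosV M S.w t ht.2.2

/-- `Ker⁻_{S,t}` for a shape `S` and `t ∈ supp S`. -/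
noncomputable def Shape.KerNeg (M : PersMod (ℝ × ℝ) k) (S : Shape) (t : ℝ × ℝ)
    (ht : t ∈ S.supp) : Submodule k (M.space t) :=
  KerNegH M S.r t ht.1.2 ⊓ KerPosV M S.w t ht.2.2 ⊔ KerNegV M S.w t ht.2.2 ⊓ KerPosH M S.r t ht.1.2

/-- `F⁺_{S,t} = Im⁻_{S,t} + Im⁺_{S,t} ∩ Ker⁺_{S,t}`. -/
noncomputable def Shape.FPos (M : PersMod (ℝ × ℝ) k) (S : Shape) (t : ℝ × ℝ)
    (ht : t ∈ S.supp) : Submodule k (M.space t) :=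
  Shape.ImNeg M S t ht ⊔ Shape.ImPos M S t ht ⊓ Shape.KerPos M S t ht

/-- `F⁻_{S,t} = Im⁻_{S,t} + Im⁺_{S,t} ∩ Ker⁻_{S,t}`. -/
noncomputable def Shape.FNeg (M : PersMod (ℝ × ℝ) k) (S : Shape) (t : ℝ × ℝ)
    (ht : t ∈ S.supp) : Submodule k (M.space t) :=
  Shape.ImNeg M S t ht ⊔ Shape.ImPos M S t ht ⊓ Shape.KerNeg M S t ht

section AuxLemmas

variable {P : Type} [Preorder P] {k : Type} [Field k]

/-- Build a cut from a downward-closed set. -/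
noncomputable def mkCut (D : Set ℝ) (hD : ∀ ⦃a b : ℝ⦄, a ≤ b → b ∈ D → a ∈ D) : Cut ℝ where
  neg := D
  pos := Dᶜ
  union_eq := Set.union_compl_self D
  inter_eq := Set.inter_compl_self D
  lt := fun x hx y hy => by
    by_contra h
    exact hy (hD (not_lt.mp h) hx)

lemma range_le_range (M : PersMod P k) {s s' u : P} (h1 : s ≤ s') (h2 : s' ≤ u) (h : s ≤ u) :
    LinearMap.range (M.map h) ≤ LinearMap.range (M.map h2) := by
  have e : M.map h = (M.map h2).comp (M.map h1) := M.map_trans h1 h2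
  rw [e]
  exact LinearMap.range_comp_le_range _ _

lemma ker_le_ker (M : PersMod P k) {s u u' : P} (h1 : s ≤ u) (h2 : u ≤ u') (h : s ≤ u') :
    LinearMap.ker (M.map h1) ≤ LinearMap.ker (M.map h) := by
  have e : M.map h = (M.map h2).comp (M.map h1) := M.map_trans h1 h2
  rw [e]
  intro a ha
  simp only [LinearMap.mem_ker] at ha ⊢
  simp [LinearMap.comp_apply, ha]

lemma range_map_self (M : PersMod P k) {u : P} (h : u ≤ u) :
    LinearMap.range (M.map h) = ⊤ := by
  have e : M.map h = LinearMap.id := M.map_refl u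
  rw [e]
  exact LinearMap.range_id

lemma ker_map_self (M : PersMod P k) {u : P} (h : u ≤ u) :
    LinearMap.ker (M.map h) = ⊥ := by
  have e : M.map h = LinearMap.id := M.map_refl u
  rw [e]
  exact LinearMap.ker_id

lemma chain_iInf_attained {E : Type} [AddCommGroup E] [Module k E] [FiniteDimensional k E]
    {ι : Type} [Nonempty ι] (f : ι → Submodule k E)
    (hc : ∀ i j : ι, f i ≤ f j ∨ f j ≤ f i) : ∃ i, (⨅ j, f j) = f i := by
  have hS : (Set.range fun i => Module.finrank k (f i)).Nonempty := Set.range_nonempty _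
  obtain ⟨i₀, hi₀⟩ := Nat.sInf_mem hS
  refine ⟨i₀, le_antisymm (iInf_le _ _) (le_iInf fun i => ?_)⟩
  rcases hc i₀ i with h | h
  · exact h
  · refine le_of_eq (Submodule.eq_of_le_of_finrank_le h ?_).symm
    have e : Module.finrank k ↥(f i₀) =
        sInf (Set.range fun i => Module.finrank k ↥(f i)) := hi₀
    rw [e]
    exact Nat.sInf_le ⟨i, rfl⟩

lemma exact_ker_le_range_right {k : Type} [Field k] (M : PersMod (ℝ × ℝ) k)
    (hex : IsExactBimod M) (t₁ t₂ x y : ℝ) (hx : t₁ ≤ x) (hy : y ≤ t₂) :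
    LinearMap.ker (M.map (show ((t₁, t₂) : ℝ × ℝ) ≤ (x, t₂) from ⟨hx, le_rfl⟩)) ≤
      LinearMap.range (M.map (show ((t₁, y) : ℝ × ℝ) ≤ (t₁, t₂) from ⟨le_rfl, hy⟩)) := by
  intro a ha
  have h := hex (t₁, y) (x, t₂) ⟨hx, hy⟩ 0 a
  have h0 : M.map (show ((x, y) : ℝ × ℝ) ≤ (x, t₂) from ⟨le_rfl, hy⟩) 0 =
      M.map (show ((t₁, t₂) : ℝ × ℝ) ≤ (x, t₂) from ⟨hx, le_rfl⟩) a := by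
    rw [map_zero]
    exact (LinearMap.mem_ker.mp ha).symm
  obtain ⟨m, _, hm2⟩ := h.mp h0
  exact ⟨m, hm2⟩

lemma exact_ker_le_range_up {k : Type} [Field k] (M : PersMod (ℝ × ℝ) k)
    (hex : IsExactBimod M) (t₁ t₂ x y : ℝ) (hx : x ≤ t₁) (hy : t₂ ≤ y) :
    LinearMap.ker (M.map (show ((t₁, t₂) : ℝ × ℝ) ≤ (t₁, y) from ⟨le_rfl, hy⟩)) ≤
      LinearMap.range (M.map (show ((x, t₂) : ℝ × ℝ) ≤ (t₁, t₂) from ⟨hx, le_rfl⟩)) := by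
  intro a ha
  have h := hex (x, t₂) (t₁, y) ⟨hx, hy⟩ a 0
  have h0 : M.map (show ((t₁, t₂) : ℝ × ℝ) ≤ (t₁, y) from ⟨le_rfl, hy⟩) a =
      M.map (show ((x, y) : ℝ × ℝ) ≤ (t₁, y) from ⟨hx, le_rfl⟩) 0 := by
    rw [map_zero]
    exact LinearMap.mem_ker.mp ha
  obtain ⟨m, hm1, _⟩ := h.mp h0
  exact ⟨m, hm1⟩

end AuxLemmas

section Construction

variable {k : Type} [Field k]

/-- The vertical birth cut adapted to `X`. -/
noncomputable def cutV (M : PersMod (ℝ × ℝ) k) (t₁ t₂ : ℝ)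
    (X : Submodule k (M.space (t₁, t₂))) : Cut ℝ :=
  mkCut {y : ℝ | ∃ h : y ≤ t₂,
      LinearMap.range (M.map (show ((t₁, y) : ℝ × ℝ) ≤ (t₁, t₂) from ⟨le_rfl, h⟩)) ≤ X}
    (by
      rintro a b hab ⟨hb, hble⟩
      exact ⟨hab.trans hb, (range_le_range M
        (show ((t₁, a) : ℝ × ℝ) ≤ (t₁, b) from ⟨le_rfl, hab⟩)
        (show ((t₁, b) : ℝ × ℝ) ≤ (t₁, t₂) from ⟨le_rfl, hb⟩) _).trans hble⟩)

/-- `Im⁺` of the vertical birth cut. -/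
noncomputable def Ipv (M : PersMod (ℝ × ℝ) k) (t₁ t₂ : ℝ)
    (X : Submodule k (M.space (t₁, t₂))) : Submodule k (M.space (t₁, t₂)) :=
  ⨅ y : {y : ℝ // y ∈ (cutV M t₁ t₂ X).pos ∧ y ≤ t₂},
    LinearMap.range (M.map (show ((t₁, (y : ℝ)) : ℝ × ℝ) ≤ (t₁, t₂) from ⟨le_rfl, y.2.2⟩))

/-- The horizontal birth cut adapted to `X`. -/
noncomputable def cutL (M : PersMod (ℝ × ℝ) k) (t₁ t₂ : ℝ)
    (X : Submodule k (M.space (t₁, t₂))) : Cut ℝ :=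
  mkCut {x : ℝ | ∃ h : x ≤ t₁,
      LinearMap.range (M.map (show ((x, t₂) : ℝ × ℝ) ≤ (t₁, t₂) from ⟨h, le_rfl⟩)) ⊓
        Ipv M t₁ t₂ X ≤ X}
    (by
      rintro a b hab ⟨hb, hble⟩
      exact ⟨hab.trans hb, (inf_le_inf_right _ (range_le_range M
        (show ((a, t₂) : ℝ × ℝ) ≤ (b, t₂) from ⟨hab, le_rfl⟩)
        (show ((b, t₂) : ℝ × ℝ) ≤ (t₁, t₂) from ⟨hb, le_rfl⟩) _)).trans hble⟩)

/-- `Im⁺` of the horizontal birth cut. -/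
noncomputable def Iph (M : PersMod (ℝ × ℝ) k) (t₁ t₂ : ℝ)
    (X : Submodule k (M.space (t₁, t₂))) : Submodule k (M.space (t₁, t₂)) :=
  ⨅ x : {x : ℝ // x ∈ (cutL M t₁ t₂ X).pos ∧ x ≤ t₁},
    LinearMap.range (M.map (show (((x : ℝ), t₂) : ℝ × ℝ) ≤ (t₁, t₂) from ⟨x.2.2, le_rfl⟩))

/-- The horizontal death cut adapted to `X`. -/
noncomputable def cutR (M : PersMod (ℝ × ℝ) k) (t₁ t₂ : ℝ)
    (X : Submodule k (M.space (t₁, t₂))) : Cut ℝ :=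
  mkCut {x : ℝ | x < t₁ ∨ ∃ h : t₁ ≤ x,
      Iph M t₁ t₂ X ⊓ Ipv M t₁ t₂ X ⊓
        LinearMap.ker (M.map (show ((t₁, t₂) : ℝ × ℝ) ≤ (x, t₂) from ⟨h, le_rfl⟩)) ≤ X}
    (by
      rintro a b hab (hb | ⟨hb, hble⟩)
      · rcases lt_or_ge a t₁ with h | h
        · exact Or.inl h
        · exact absurd hb (not_lt.mpr (h.trans hab))
      · rcases lt_or_ge a t₁ with h | h
        · exact Or.inl h
        · exact Or.inr ⟨h, (inf_le_inf_left _ (ker_le_ker M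
            (show ((t₁, t₂) : ℝ × ℝ) ≤ (a, t₂) from ⟨h, le_rfl⟩)
            (show ((a, t₂) : ℝ × ℝ) ≤ (b, t₂) from ⟨hab, le_rfl⟩) _)).trans hble⟩)

/-- `Ker⁺` of the horizontal death cut. -/
noncomputable def Kpr (M : PersMod (ℝ × ℝ) k) (t₁ t₂ : ℝ)
    (X : Submodule k (M.space (t₁, t₂))) : Submodule k (M.space (t₁, t₂)) :=
  ⨅ x : {x : ℝ // x ∈ (cutR M t₁ t₂ X).pos},
    LinearMap.ker (M.map (show ((t₁, t₂) : ℝ × ℝ) ≤ ((x : ℝ), t₂) from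
      ⟨le_of_not_gt fun hlt => x.2 (Or.inl hlt), le_rfl⟩))

/-- The vertical death cut adapted to `X`. -/
noncomputable def cutW (M : PersMod (ℝ × ℝ) k) (t₁ t₂ : ℝ)
    (X : Submodule k (M.space (t₁, t₂))) : Cut ℝ :=
  mkCut {y : ℝ | y < t₂ ∨ ∃ h : t₂ ≤ y,
      Iph M t₁ t₂ X ⊓ Ipv M t₁ t₂ X ⊓ Kpr M t₁ t₂ X ⊓
        LinearMap.ker (M.map (show ((t₁, t₂) : ℝ × ℝ) ≤ (t₁, y) from ⟨le_rfl, h⟩)) ≤ X}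
    (by
      rintro a b hab (hb | ⟨hb, hble⟩)
      · rcases lt_or_ge a t₂ with h | h
        · exact Or.inl h
        · exact absurd hb (not_lt.mpr (h.trans hab))
      · rcases lt_or_ge a t₂ with h | h
        · exact Or.inl h
        · exact Or.inr ⟨h, (inf_le_inf_left _ (ker_le_ker M
            (show ((t₁, t₂) : ℝ × ℝ) ≤ (t₁, a) from ⟨le_rfl, h⟩)
            (show ((t₁, a) : ℝ × ℝ) ≤ (t₁, b) from ⟨le_rfl, hab⟩) _)).trans hble⟩)

lemma inf_iInf_eq {E : Type} [AddCommGroup E] [Module k E] {ι : Type} [Nonempty ι]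
    (f : ι → Submodule k E) (B : Submodule k E) :
    (⨅ i, f i) ⊓ B = ⨅ i, (f i ⊓ B) := by
  apply le_antisymm
  · exact le_iInf fun i => inf_le_inf_right _ (iInf_le _ i)
  · exact le_inf (le_iInf fun i => (iInf_le _ i).trans inf_le_left)
      ((iInf_le _ (Classical.arbitrary ι)).trans inf_le_right)

end Construction

/-- **Covering by the combined sections.** For an exact pfd persistence bimodule over
`ℝ²`, a point `t`, and a proper subspace `X ⊊ M_t`, there is a shape `S` whose support
contains `t` such that `F⁻_{S,t} ⊆ X` and `F⁺_{S,t} ⊄ X`. -/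
theorem covering_by_combined_sections {k : Type} [Field k] (M : PersMod (ℝ × ℝ) k)
    (hpfd : M.pfd) (hex : IsExactBimod M) (t : ℝ × ℝ)
    (X : Submodule k (M.space t)) (hX : X ≠ ⊤) :
    ∃ (S : Shape) (ht : t ∈ S.supp),
      Shape.FNeg M S t ht ≤ X ∧ ¬ Shape.FPos M S t ht ≤ X := by
  obtain ⟨t₁, t₂⟩ := t
  haveI hfd : FiniteDimensional k (M.space (t₁, t₂)) := hpfd _
  -- `t` lies in the support of all four cuts
  have ht2v : t₂ ∈ (cutV M t₁ t₂ X).pos := by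
    rintro ⟨h, hle⟩
    rw [range_map_self M (show ((t₁, t₂) : ℝ × ℝ) ≤ (t₁, t₂) from ⟨le_rfl, h⟩)] at hle
    exact hX (top_le_iff.mp hle)
  -- `Ipv` is attained and not contained in `X`
  haveI hne_v : Nonempty {y : ℝ // y ∈ (cutV M t₁ t₂ X).pos ∧ y ≤ t₂} := ⟨⟨t₂, ht2v, le_rfl⟩⟩
  obtain ⟨y₀, hy₀⟩ := chain_iInf_attained
    (f := fun y : {y : ℝ // y ∈ (cutV M t₁ t₂ X).pos ∧ y ≤ t₂} =>
      LinearMap.range (M.map (show ((t₁, (y : ℝ)) : ℝ × ℝ) ≤ (t₁, t₂) from ⟨le_rfl, y.2.2⟩)))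
    (fun i j => by
      rcases le_total (i : ℝ) (j : ℝ) with hij | hij
      · exact Or.inl (range_le_range M
          (show ((t₁, (i : ℝ)) : ℝ × ℝ) ≤ (t₁, (j : ℝ)) from ⟨le_rfl, hij⟩) _ _)
      · exact Or.inr (range_le_range M
          (show ((t₁, (j : ℝ)) : ℝ × ℝ) ≤ (t₁, (i : ℝ)) from ⟨le_rfl, hij⟩) _ _))
  have hIpveq : Ipv M t₁ t₂ X = LinearMap.range (M.map
      (show ((t₁, (y₀ : ℝ)) : ℝ × ℝ) ≤ (t₁, t₂) from ⟨le_rfl, y₀.2.2⟩)) := hy₀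
  have hIpvX : ¬ Ipv M t₁ t₂ X ≤ X := by
    rw [hIpveq]
    intro hle
    exact y₀.2.1 ⟨y₀.2.2, hle⟩
  have ht1l : t₁ ∈ (cutL M t₁ t₂ X).pos := by
    rintro ⟨h, hle⟩
    rw [range_map_self M (show ((t₁, t₂) : ℝ × ℝ) ≤ (t₁, t₂) from ⟨h, le_rfl⟩),
      top_inf_eq] at hle
    exact hIpvX hle
  -- `Iph ⊓ Ipv` is attained and not contained in `X`
  haveI hne_l : Nonempty {x : ℝ // x ∈ (cutL M t₁ t₂ X).pos ∧ x ≤ t₁} := ⟨⟨t₁, ht1l, le_rfl⟩⟩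
  obtain ⟨x₀, hx₀⟩ := chain_iInf_attained
    (f := fun x : {x : ℝ // x ∈ (cutL M t₁ t₂ X).pos ∧ x ≤ t₁} =>
      LinearMap.range (M.map (show (((x : ℝ), t₂) : ℝ × ℝ) ≤ (t₁, t₂) from ⟨x.2.2, le_rfl⟩)) ⊓
        Ipv M t₁ t₂ X)
    (fun i j => by
      rcases le_total (i : ℝ) (j : ℝ) with hij | hij
      · exact Or.inl (inf_le_inf_right _ (range_le_range M
          (show (((i : ℝ), t₂) : ℝ × ℝ) ≤ ((j : ℝ), t₂) from ⟨hij, le_rfl⟩) _ _))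
      · exact Or.inr (inf_le_inf_right _ (range_le_range M
          (show (((j : ℝ), t₂) : ℝ × ℝ) ≤ ((i : ℝ), t₂) from ⟨hij, le_rfl⟩) _ _)))
  have hWeq : Iph M t₁ t₂ X ⊓ Ipv M t₁ t₂ X = LinearMap.range (M.map
      (show (((x₀ : ℝ), t₂) : ℝ × ℝ) ≤ (t₁, t₂) from ⟨x₀.2.2, le_rfl⟩)) ⊓ Ipv M t₁ t₂ X := by
    refine Eq.trans ?_ hx₀
    exact inf_iInf_eq (fun x : {x : ℝ // x ∈ (cutL M t₁ t₂ X).pos ∧ x ≤ t₁} =>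
      LinearMap.range (M.map (show (((x : ℝ), t₂) : ℝ × ℝ) ≤ (t₁, t₂) from ⟨x.2.2, le_rfl⟩)))
      (Ipv M t₁ t₂ X)
  have hWX : ¬ Iph M t₁ t₂ X ⊓ Ipv M t₁ t₂ X ≤ X := by
    rw [hWeq]
    intro hle
    exact x₀.2.1 ⟨x₀.2.2, hle⟩
  have ht1r : t₁ ∈ (cutR M t₁ t₂ X).neg := Or.inr ⟨le_rfl, by
    rw [ker_map_self M (show ((t₁, t₂) : ℝ × ℝ) ≤ (t₁, t₂) from ⟨le_rfl, le_rfl⟩), inf_bot_eq]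
    exact bot_le⟩
  have ht2w : t₂ ∈ (cutW M t₁ t₂ X).neg := Or.inr ⟨le_rfl, by
    rw [ker_map_self M (show ((t₁, t₂) : ℝ × ℝ) ≤ (t₁, t₂) from ⟨le_rfl, le_rfl⟩), inf_bot_eq]
    exact bot_le⟩
  -- the two key exactness claims, forbidding mixed shapes
  have claim_r : (cutV M t₁ t₂ X).neg.Nonempty → (cutR M t₁ t₂ X).pos = ∅ := by
    rintro ⟨y', hy'⟩
    obtain ⟨hy2, hyle⟩ := hy'
    rw [Set.eq_empty_iff_forall_notMem]
    intro x hx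
    apply hx
    rcases lt_or_ge x t₁ with h | h
    · exact Or.inl h
    · exact Or.inr ⟨h, le_trans inf_le_right
        (le_trans (exact_ker_le_range_right M hex t₁ t₂ x y' h hy2) hyle)⟩
  have claim_w : (cutL M t₁ t₂ X).neg.Nonempty → (cutW M t₁ t₂ X).pos = ∅ := by
    rintro ⟨x', hx'⟩
    obtain ⟨hx2, hxle⟩ := hx'
    rw [Set.eq_empty_iff_forall_notMem]
    intro y hy
    apply hy
    rcases lt_or_ge y t₂ with h | h
    · exact Or.inl h
    · refine Or.inr ⟨h, ?_⟩
      intro a ha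
      obtain ⟨ha1, haker⟩ := Submodule.mem_inf.mp ha
      obtain ⟨haW, -⟩ := Submodule.mem_inf.mp ha1
      obtain ⟨-, haIpv⟩ := Submodule.mem_inf.mp haW
      exact hxle (Submodule.mem_inf.mpr
        ⟨exact_ker_le_range_up M hex t₁ t₂ x' y hx2 h haker, haIpv⟩)
  -- the four cuts form a legal shape
  have hty : ((cutR M t₁ t₂ X).pos = ∅ ∧ (cutW M t₁ t₂ X).pos = ∅) ∨
      ((cutL M t₁ t₂ X).neg = ∅ ∧ (cutV M t₁ t₂ X).neg = ∅) ∨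
      ((cutL M t₁ t₂ X).neg = ∅ ∧ (cutR M t₁ t₂ X).pos = ∅) ∨
      ((cutV M t₁ t₂ X).neg = ∅ ∧ (cutW M t₁ t₂ X).pos = ∅) := by
    rcases Set.eq_empty_or_nonempty (cutL M t₁ t₂ X).neg with hl | hl
    · rcases Set.eq_empty_or_nonempty (cutV M t₁ t₂ X).neg with hv | hv
      · exact Or.inr (Or.inl ⟨hl, hv⟩)
      · exact Or.inr (Or.inr (Or.inl ⟨hl, claim_r hv⟩))
    · rcases Set.eq_empty_or_nonempty (cutV M t₁ t₂ X).neg with hv | hv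
      · exact Or.inr (Or.inr (Or.inr ⟨hv, claim_w hl⟩))
      · exact Or.inl ⟨claim_r hv, claim_w hl⟩
  refine ⟨⟨cutL M t₁ t₂ X, cutR M t₁ t₂ X, cutV M t₁ t₂ X, cutW M t₁ t₂ X, hty⟩,
    ⟨⟨ht1l, ht1r⟩, ht2v, ht2w⟩, ?_, ?_⟩
  · -- F⁻ ≤ X
    refine sup_le (sup_le ?_ ?_) ?_
    · -- ImNegH l ⊓ ImPosV v ≤ X
      intro a ha
      obtain ⟨ha1, ha2⟩ := Submodule.mem_inf.mp ha
      have ha1' : a ∈ ImNegH M (cutL M t₁ t₂ X) (t₁, t₂) ht1l := ha1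
      have ha2' : a ∈ Ipv M t₁ t₂ X := ha2
      rcases Set.eq_empty_or_nonempty (cutL M t₁ t₂ X).neg with hl | hl
      · haveI : IsEmpty ↥(cutL M t₁ t₂ X).neg := Set.isEmpty_coe_sort.mpr hl
        have hbot : ImNegH M (cutL M t₁ t₂ X) (t₁, t₂) ht1l = ⊥ := iSup_of_empty _
        rw [hbot, Submodule.mem_bot] at ha1'
        rw [ha1']
        exact X.zero_mem
      · haveI : Nonempty ↥(cutL M t₁ t₂ X).neg := hl.to_subtype
        have hdir : Directed (· ≤ ·) (fun x : ↥(cutL M t₁ t₂ X).neg =>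
            LinearMap.range (M.map (show (((x : ℝ), t₂) : ℝ × ℝ) ≤ (t₁, t₂) from
              ⟨((cutL M t₁ t₂ X).lt x x.2 t₁ ht1l).le, le_rfl⟩))) := by
          intro i j
          rcases le_total (i : ℝ) (j : ℝ) with hij | hij
          · exact ⟨j, range_le_range M
              (show (((i : ℝ), t₂) : ℝ × ℝ) ≤ ((j : ℝ), t₂) from ⟨hij, le_rfl⟩) _ _, le_rfl⟩
          · exact ⟨i, le_rfl, range_le_range M
              (show (((j : ℝ), t₂) : ℝ × ℝ) ≤ ((i : ℝ), t₂) from ⟨hij, le_rfl⟩) _ _⟩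
        obtain ⟨x, hax⟩ := (Submodule.mem_iSup_of_directed _ hdir).mp ha1'
        obtain ⟨hx2, hxle⟩ := x.2
        exact hxle (Submodule.mem_inf.mpr ⟨hax, ha2'⟩)
    · -- ImNegV v ⊓ ImPosH l ≤ X
      intro a ha
      obtain ⟨ha1, -⟩ := Submodule.mem_inf.mp ha
      have ha1' : a ∈ ImNegV M (cutV M t₁ t₂ X) (t₁, t₂) ht2v := ha1
      rcases Set.eq_empty_or_nonempty (cutV M t₁ t₂ X).neg with hv | hv
      · haveI : IsEmpty ↥(cutV M t₁ t₂ X).neg := Set.isEmpty_coe_sort.mpr hv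
        have hbot : ImNegV M (cutV M t₁ t₂ X) (t₁, t₂) ht2v = ⊥ := iSup_of_empty _
        rw [hbot, Submodule.mem_bot] at ha1'
        rw [ha1']
        exact X.zero_mem
      · haveI : Nonempty ↥(cutV M t₁ t₂ X).neg := hv.to_subtype
        have hdir : Directed (· ≤ ·) (fun y : ↥(cutV M t₁ t₂ X).neg =>
            LinearMap.range (M.map (show ((t₁, (y : ℝ)) : ℝ × ℝ) ≤ (t₁, t₂) from
              ⟨le_rfl, ((cutV M t₁ t₂ X).lt y y.2 t₂ ht2v).le⟩))) := by
          intro i j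
          rcases le_total (i : ℝ) (j : ℝ) with hij | hij
          · exact ⟨j, range_le_range M
              (show ((t₁, (i : ℝ)) : ℝ × ℝ) ≤ (t₁, (j : ℝ)) from ⟨le_rfl, hij⟩) _ _, le_rfl⟩
          · exact ⟨i, le_rfl, range_le_range M
              (show ((t₁, (j : ℝ)) : ℝ × ℝ) ≤ (t₁, (i : ℝ)) from ⟨le_rfl, hij⟩) _ _⟩
        obtain ⟨y, hay⟩ := (Submodule.mem_iSup_of_directed _ hdir).mp ha1'
        obtain ⟨hy2, hyle⟩ := y.2
        exact hyle hay
    · -- Im⁺ ⊓ Ker⁻ ≤ X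
      intro a ha
      obtain ⟨haW, haK⟩ := Submodule.mem_inf.mp ha
      have haW' : a ∈ Iph M t₁ t₂ X ⊓ Ipv M t₁ t₂ X := haW
      obtain ⟨haIph, haIpv⟩ := Submodule.mem_inf.mp haW'
      have haK' : a ∈ KerNegH M (cutR M t₁ t₂ X) (t₁, t₂) ht1r ⊓
          KerPosV M (cutW M t₁ t₂ X) (t₁, t₂) ht2w ⊔
          KerNegV M (cutW M t₁ t₂ X) (t₁, t₂) ht2w ⊓
          KerPosH M (cutR M t₁ t₂ X) (t₁, t₂) ht1r := haK
      obtain ⟨b, hb, c, hc, hbc⟩ := Submodule.mem_sup.mp haK'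
      obtain ⟨hbKN, -⟩ := Submodule.mem_inf.mp hb
      obtain ⟨hcKN, hcKPr⟩ := Submodule.mem_inf.mp hc
      haveI : Nonempty {x : ℝ // x ∈ (cutR M t₁ t₂ X).neg ∧ t₁ ≤ x} := ⟨⟨t₁, ht1r, le_rfl⟩⟩
      have hdirr : Directed (· ≤ ·) (fun x : {x : ℝ // x ∈ (cutR M t₁ t₂ X).neg ∧ t₁ ≤ x} =>
          LinearMap.ker (M.map (show ((t₁, t₂) : ℝ × ℝ) ≤ ((x : ℝ), t₂) from
            ⟨x.2.2, le_rfl⟩))) := by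
        intro i j
        rcases le_total (i : ℝ) (j : ℝ) with hij | hij
        · exact ⟨j, ker_le_ker M _
            (show (((i : ℝ), t₂) : ℝ × ℝ) ≤ ((j : ℝ), t₂) from ⟨hij, le_rfl⟩) _, le_rfl⟩
        · exact ⟨i, le_rfl, ker_le_ker M _
            (show (((j : ℝ), t₂) : ℝ × ℝ) ≤ ((i : ℝ), t₂) from ⟨hij, le_rfl⟩) _⟩
      obtain ⟨x, hbker⟩ := (Submodule.mem_iSup_of_directed _ hdirr).mp hbKN
      haveI : Nonempty {y : ℝ // y ∈ (cutW M t₁ t₂ X).neg ∧ t₂ ≤ y} := ⟨⟨t₂, ht2w, le_rfl⟩⟩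
      have hdirw : Directed (· ≤ ·) (fun y : {y : ℝ // y ∈ (cutW M t₁ t₂ X).neg ∧ t₂ ≤ y} =>
          LinearMap.ker (M.map (show ((t₁, t₂) : ℝ × ℝ) ≤ (t₁, (y : ℝ)) from
            ⟨le_rfl, y.2.2⟩))) := by
        intro i j
        rcases le_total (i : ℝ) (j : ℝ) with hij | hij
        · exact ⟨j, ker_le_ker M _
            (show ((t₁, (i : ℝ)) : ℝ × ℝ) ≤ (t₁, (j : ℝ)) from ⟨le_rfl, hij⟩) _, le_rfl⟩
        · exact ⟨i, le_rfl, ker_le_ker M _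
            (show ((t₁, (j : ℝ)) : ℝ × ℝ) ≤ (t₁, (i : ℝ)) from ⟨le_rfl, hij⟩) _⟩
      obtain ⟨y, hcker⟩ := (Submodule.mem_iSup_of_directed _ hdirw).mp hcKN
      have hbIpv : b ∈ Ipv M t₁ t₂ X := by
        refine (Submodule.mem_iInf _).mpr fun y' => ?_
        exact exact_ker_le_range_right M hex t₁ t₂ x y' x.2.2 y'.2.2 hbker
      have hcIph : c ∈ Iph M t₁ t₂ X := by
        refine (Submodule.mem_iInf _).mpr fun x' => ?_
        exact exact_ker_le_range_up M hex t₁ t₂ x' y x'.2.2 y.2.2 hcker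
      have hbeq : b = a - c := eq_sub_of_add_eq hbc
      have hceq : c = a - b := eq_sub_of_add_eq' hbc
      have hbIph : b ∈ Iph M t₁ t₂ X := by rw [hbeq]; exact sub_mem haIph hcIph
      have hcIpv : c ∈ Ipv M t₁ t₂ X := by rw [hceq]; exact sub_mem haIpv hbIpv
      have hbX : b ∈ X := by
        rcases x.2.1 with h | ⟨h, hle⟩
        · exact absurd h (not_lt.mpr x.2.2)
        · exact hle (Submodule.mem_inf.mpr ⟨Submodule.mem_inf.mpr ⟨hbIph, hbIpv⟩, hbker⟩)
      have hcX : c ∈ X := by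
        have hcKPr' : c ∈ Kpr M t₁ t₂ X := hcKPr
        rcases y.2.1 with h | ⟨h, hle⟩
        · exact absurd h (not_lt.mpr y.2.2)
        · exact hle (Submodule.mem_inf.mpr ⟨Submodule.mem_inf.mpr
            ⟨Submodule.mem_inf.mpr ⟨hcIph, hcIpv⟩, hcKPr'⟩, hcker⟩)
      rw [← hbc]
      exact X.add_mem hbX hcX
  · -- ¬ F⁺ ≤ X
    intro hle
    have hle2 : Iph M t₁ t₂ X ⊓ Ipv M t₁ t₂ X ⊓
        (KerPosH M (cutR M t₁ t₂ X) (t₁, t₂) ht1r ⊓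
          KerPosV M (cutW M t₁ t₂ X) (t₁, t₂) ht2w) ≤ X :=
      le_trans le_sup_right hle
    rcases Set.eq_empty_or_nonempty (cutW M t₁ t₂ X).pos with hw | hw
    · have hKpw : KerPosV M (cutW M t₁ t₂ X) (t₁, t₂) ht2w = ⊤ := by
        haveI : IsEmpty ↥(cutW M t₁ t₂ X).pos := Set.isEmpty_coe_sort.mpr hw
        exact iInf_of_empty _
      rcases Set.eq_empty_or_nonempty (cutR M t₁ t₂ X).pos with hr | hr
      · have hKpr : KerPosH M (cutR M t₁ t₂ X) (t₁, t₂) ht1r = ⊤ := by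
          haveI : IsEmpty ↥(cutR M t₁ t₂ X).pos := Set.isEmpty_coe_sort.mpr hr
          exact iInf_of_empty _
        rw [hKpr, hKpw, inf_top_eq, inf_top_eq] at hle2
        exact hWX hle2
      · haveI : Nonempty ↥(cutR M t₁ t₂ X).pos := hr.to_subtype
        obtain ⟨x₁, hx₁⟩ := chain_iInf_attained
          (f := fun x : ↥(cutR M t₁ t₂ X).pos =>
            LinearMap.ker (M.map (show ((t₁, t₂) : ℝ × ℝ) ≤ ((x : ℝ), t₂) from
              ⟨((cutR M t₁ t₂ X).lt t₁ ht1r x x.2).le, le_rfl⟩)))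
          (fun i j => by
            rcases le_total (i : ℝ) (j : ℝ) with hij | hij
            · exact Or.inl (ker_le_ker M _
                (show (((i : ℝ), t₂) : ℝ × ℝ) ≤ ((j : ℝ), t₂) from ⟨hij, le_rfl⟩) _)
            · exact Or.inr (ker_le_ker M _
                (show (((j : ℝ), t₂) : ℝ × ℝ) ≤ ((i : ℝ), t₂) from ⟨hij, le_rfl⟩) _))
        have hKpr : KerPosH M (cutR M t₁ t₂ X) (t₁, t₂) ht1r = _ := hx₁
        apply x₁.2
        refine Or.inr ⟨((cutR M t₁ t₂ X).lt t₁ ht1r x₁ x₁.2).le, ?_⟩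
        intro a ha
        obtain ⟨haW, haker⟩ := Submodule.mem_inf.mp ha
        refine hle2 (Submodule.mem_inf.mpr ⟨haW, Submodule.mem_inf.mpr ⟨?_, ?_⟩⟩)
        · exact hKpr.ge haker
        · exact hKpw.ge Submodule.mem_top
    · haveI : Nonempty ↥(cutW M t₁ t₂ X).pos := hw.to_subtype
      obtain ⟨y₁, hy₁⟩ := chain_iInf_attained
        (f := fun y : ↥(cutW M t₁ t₂ X).pos =>
          LinearMap.ker (M.map (show ((t₁, t₂) : ℝ × ℝ) ≤ (t₁, (y : ℝ)) from
            ⟨le_rfl, ((cutW M t₁ t₂ X).lt t₂ ht2w y y.2).le⟩)))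
        (fun i j => by
          rcases le_total (i : ℝ) (j : ℝ) with hij | hij
          · exact Or.inl (ker_le_ker M _
              (show ((t₁, (i : ℝ)) : ℝ × ℝ) ≤ (t₁, (j : ℝ)) from ⟨le_rfl, hij⟩) _)
          · exact Or.inr (ker_le_ker M _
              (show ((t₁, (j : ℝ)) : ℝ × ℝ) ≤ (t₁, (i : ℝ)) from ⟨le_rfl, hij⟩) _))
      apply y₁.2
      refine Or.inr ⟨((cutW M t₁ t₂ X).lt t₂ ht2w y₁ y₁.2).le, ?_⟩
      intro a ha
      obtain ⟨ha1, haker⟩ := Submodule.mem_inf.mp ha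
      obtain ⟨haW, haKpr⟩ := Submodule.mem_inf.mp ha1
      have haKpr' : a ∈ KerPosH M (cutR M t₁ t₂ X) (t₁, t₂) ht1r := haKpr
      exact hle2 (Submodule.mem_inf.mpr ⟨haW, Submodule.mem_inf.mpr ⟨haKpr', hy₁.ge haker⟩⟩)
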